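/- Given the SINR approximation μ_k = P_t|g_{k,n*_k}|² / (Σ_{b_n∉C_m} P_t|g_{k,n}|² + σ²) for user u_k ∈ C_m, the per-user rate (1/K) Σ_k log₂(1+μ_k) is lower bounded by log₂(1 + K/(β + Σ_m Σ_{u_k∈C_m} Σ_{b_n∉C_m} w_{k,n})) where w_{k,n} = |g_{k,n}|²/|g_{k,n*_k}|² and β = Σ_k σ²/(P_t|g_{k,n*_k}|²). -/

import Mathlib

open Finset

lemma convexOn_log_one_add_inv :
    ConvexOn ℝ (Set.Ioi (0:ℝ)) (fun x => Real.log (1 + 1/x)) := by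
  have hint : interior (Set.Ioi (0:ℝ)) = Set.Ioi 0 := interior_Ioi
  refine convexOn_of_hasDerivWithinAt2_nonneg (f' := fun x => -(x^2+x)⁻¹)
    (f'' := fun x => (2*x+1) * ((x^2+x)^2)⁻¹) (convex_Ioi 0) ?_ ?_ ?_ ?_
  · refine ContinuousOn.log ?_ ?_
    · exact continuousOn_const.add (continuousOn_const.div continuousOn_id
        (fun x hx => ne_of_gt hx))
    · intro x hx
      have hx0 : (0:ℝ) < x := hx
      have h1 : (0:ℝ) < 1/x := by positivity
      linarith
  · rw [hint]
    intro x hx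
    have hx0 : (0:ℝ) < x := hx
    have hu : HasDerivAt (fun y : ℝ => 1 + 1/y) (-(x^2)⁻¹) x := by
      simpa [one_div] using (hasDerivAt_inv hx0.ne').const_add 1
    have hpos : (0:ℝ) < 1 + 1/x := by positivity
    have h := (hu.log hpos.ne')
    have heq : -(x^2)⁻¹ / (1 + 1/x) = -(x^2+x)⁻¹ := by
      field_simp
    rw [heq] at h
    exact h.hasDerivWithinAt
  · rw [hint]
    intro x hx
    have hx0 : (0:ℝ) < x := hx
    have hne : x^2 + x ≠ 0 := by positivity
    have hu : HasDerivAt (fun y : ℝ => y^2 + y) (2*x+1) x := by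
      exact ((hasDerivAt_pow 2 x).add (hasDerivAt_id' x)).congr_deriv (by norm_num)
    have h := (hu.inv hne).neg
    have heq : - (-(2*x+1) / (x^2+x)^2) = (2*x+1) * ((x^2+x)^2)⁻¹ := by
      field_simp
    rw [heq] at h
    exact h.hasDerivWithinAt
  · rw [hint]
    intro x hx
    have hx0 : (0:ℝ) < x := hx
    positivity

lemma convexOn_logb_one_add_inv :
    ConvexOn ℝ (Set.Ioi (0:ℝ)) (fun x => Real.logb 2 (1 + 1/x)) := by
  have h := convexOn_log_one_add_inv.smul (c := (Real.log 2)⁻¹)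
    (by positivity)
  convert h using 2 with x
  · rfl
  · rfl
  · simp [Real.logb, smul_eq_mul, div_eq_inv_mul]

/-- Lower bound on the per-user rate in terms of the normalized crossing weights:
`(1/K) Σ_k log₂(1+μ_k) ≥ log₂(1 + K/(β + Σ_m Σ_{u_k∈C_m} Σ_{b_n∉C_m} w_{k,n}))`. -/
theorem per_user_rate_lower_bound {K N M : ℕ} (hK : 0 < K)
    (g : Fin K → Fin N → ℂ) (nstar : Fin K → Fin N)
    (hmax : ∀ k n, ‖g k n‖ ^ 2 ≤ ‖g k (nstar k)‖ ^ 2)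
    (hpos : ∀ k, 0 < ‖g k (nstar k)‖ ^ 2)
    (Pt σ2 : ℝ) (hPt : 0 < Pt) (hσ : 0 < σ2)
    (beamsOf : Fin M → Finset (Fin N)) (mOf : Fin K → Fin M) :
    (1 / (K : ℝ)) * ∑ k, Real.logb 2 (1 +
        Pt * ‖g k (nstar k)‖ ^ 2 /
          ((∑ n ∈ (beamsOf (mOf k))ᶜ, Pt * ‖g k n‖ ^ 2) + σ2)) ≥
      Real.logb 2 (1 + (K : ℝ) /
        ((∑ k, σ2 / (Pt * ‖g k (nstar k)‖ ^ 2)) +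
          ∑ k, ∑ n ∈ (beamsOf (mOf k))ᶜ,
            ‖g k n‖ ^ 2 / ‖g k (nstar k)‖ ^ 2)) := by
  set x : Fin K → ℝ := fun k =>
    ((∑ n ∈ (beamsOf (mOf k))ᶜ, Pt * ‖g k n‖ ^ 2) + σ2) /
      (Pt * ‖g k (nstar k)‖ ^ 2) with hx
  have hxpos : ∀ k, 0 < x k := by
    intro k
    apply div_pos
    · have : 0 ≤ ∑ n ∈ (beamsOf (mOf k))ᶜ, Pt * ‖g k n‖ ^ 2 :=
        Finset.sum_nonneg fun n _ => by positivity
      linarith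
    · exact mul_pos hPt (hpos k)
  have hKpos : (0:ℝ) < K := by exact_mod_cast hK
  -- Jensen
  have hJ := convexOn_logb_one_add_inv.map_sum_le (t := Finset.univ)
    (w := fun _ : Fin K => 1 / (K:ℝ)) (p := x)
    (fun i _ => by positivity)
    (by simp; field_simp)
    (fun i _ => hxpos i)
  -- sum of x equals β + w-sum
  have hS : ∑ k, x k =
      (∑ k, σ2 / (Pt * ‖g k (nstar k)‖ ^ 2)) +
        ∑ k, ∑ n ∈ (beamsOf (mOf k))ᶜ,
          ‖g k n‖ ^ 2 / ‖g k (nstar k)‖ ^ 2 := by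
    rw [← Finset.sum_add_distrib]
    refine Finset.sum_congr rfl fun k _ => ?_
    have ha := hpos k
    rw [hx]
    dsimp only
    rw [add_div, Finset.sum_div]
    rw [add_comm]
    congr 1
    refine Finset.sum_congr rfl fun n _ => ?_
    rw [mul_div_mul_left _ _ hPt.ne']
  set S := (∑ k, σ2 / (Pt * ‖g k (nstar k)‖ ^ 2)) +
        ∑ k, ∑ n ∈ (beamsOf (mOf k))ᶜ,
          ‖g k n‖ ^ 2 / ‖g k (nstar k)‖ ^ 2 with hSdef
  have hSpos : 0 < S := by
    rw [← hS]
    exact Finset.sum_pos (fun k _ => hxpos k) ⟨⟨0, hK⟩, Finset.mem_univ _⟩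
  have hmean : ∑ k : Fin K, (1/(K:ℝ)) • x k = S / K := by
    rw [← hS, Finset.smul_sum.symm]
    · simp [smul_eq_mul, div_eq_inv_mul, ← Finset.mul_sum]
  have hargl : 1 + (K:ℝ)/S = 1 + 1/(S/K) := by
    rw [one_div_div]
  have hterm : ∀ k, 1 + 1 / x k = 1 +
      Pt * ‖g k (nstar k)‖ ^ 2 /
        ((∑ n ∈ (beamsOf (mOf k))ᶜ, Pt * ‖g k n‖ ^ 2) + σ2) := by
    intro k
    rw [hx, one_div_div]
  calc Real.logb 2 (1 + (K:ℝ)/S)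
      = Real.logb 2 (1 + 1/(S/K)) := by rw [hargl]
    _ ≤ ∑ k : Fin K, (1/(K:ℝ)) • Real.logb 2 (1 + 1/(x k)) := by
        rw [← hmean] at *
        exact hJ
    _ = (1/(K:ℝ)) * ∑ k, Real.logb 2 (1 +
          Pt * ‖g k (nstar k)‖ ^ 2 /
            ((∑ n ∈ (beamsOf (mOf k))ᶜ, Pt * ‖g k n‖ ^ 2) + σ2)) := by
        rw [Finset.mul_sum]
        exact Finset.sum_congr rfl fun k _ => by rw [smul_eq_mul, hterm k]
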